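/- arXiv:2602.14758 — 5 statements merged into one kernel-verified Lean document; each statement's English description precedes it below -/
import Mathlib

section
/- Suppose the susceptible state satisfies the componentwise condition Σ_k γ_{D_k} λ_k S_k(n) C_{kj} ≤ γ_{D_j}(γ_{R_j}+γ_{D_j}−ε) for all j, where 0 < ε < min_k(γ_{R_k}+γ_{D_k}). Then for any nonnegative infected vector I(n), the weighted infected count decreases: γ_D^⊤ I(n+1) − γ_D^⊤ I(n) ≤ −ε γ_D^⊤ I(n). -/
open Finset

/-- componentwise terminal-region condition implies decrease of
the weighted infected count. -/
theorem sird_weighted_infected_decrease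
    (na : ℕ) (S I I' : Fin na → ℝ)
    (lam gR gD : Fin na → ℝ) (C : Fin na → Fin na → ℝ) (eps : ℝ)
    (hgD : ∀ k, 0 < gD k) (hlam : ∀ k, 0 ≤ lam k) (hC : ∀ k j, 0 ≤ C k j)
    (hI0 : ∀ k, 0 ≤ I k)
    (heps0 : 0 < eps) (heps1 : ∀ k, eps < gR k + gD k)
    (hcond : ∀ j, ∑ k, gD k * lam k * S k * C k j ≤ gD j * (gR j + gD j - eps))
    (hI : ∀ k, I' k = I k + lam k * S k * ∑ j, C k j * I j - (gR k + gD k) * I k) :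
    (∑ k, gD k * I' k) - (∑ k, gD k * I k) ≤ -eps * ∑ k, gD k * I k := by
  have expand : ∑ k, gD k * I' k
      = ∑ k, gD k * I k + ∑ k, gD k * (lam k * S k * ∑ j, C k j * I j)
        - ∑ k, gD k * ((gR k + gD k) * I k) := by
    rw [← Finset.sum_add_distrib, ← Finset.sum_sub_distrib]
    apply Finset.sum_congr rfl
    intro k _
    rw [hI k]; ring
  have swap : ∑ k, gD k * (lam k * S k * ∑ j, C k j * I j)
      = ∑ j, (∑ k, gD k * lam k * S k * C k j) * I j := by
    simp_rw [Finset.mul_sum, Finset.sum_mul]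
    rw [Finset.sum_comm]
    apply Finset.sum_congr rfl; intro k _
    apply Finset.sum_congr rfl; intro j _
    ring
  have hM : ∑ j, (∑ k, gD k * lam k * S k * C k j) * I j
      ≤ ∑ j, gD j * (gR j + gD j - eps) * I j := by
    apply Finset.sum_le_sum
    intro j _
    exact mul_le_mul_of_nonneg_right (hcond j) (hI0 j)
  have hsplit : ∑ j, gD j * (gR j + gD j - eps) * I j
      = ∑ k, gD k * ((gR k + gD k) * I k) - eps * ∑ k, gD k * I k := by
    rw [Finset.mul_sum, ← Finset.sum_sub_distrib]
    apply Finset.sum_congr rfl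
    intro k _
    ring
  rw [expand, swap]
  linarith [hM, hsplit]
end

section
/- Define the terminal cost V_f(x) = (1/ε) γ_D^⊤ I. For any state x in the terminal set X_f (i.e., satisfying C^⊤ Λ S ≤ Γ componentwise, or I = 0) and with zero vaccination input, the terminal cost satisfies the Lyapunov decrease condition V_f(f(x,0)) − V_f(x) ≤ −γ_D^⊤ I = −l(x,0). -/
/-!
Weighting the infected compartments by `γ_D` and exchanging the order of summation in the
infection term turns `γ_D^⊤ I(n+1)` into `∑_j ((C^⊤ Λ S)_j − γ_{D_j}(γ_{R_j} + γ_{D_j} − 1)) I_j`.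
On the terminal set each coefficient is at most `(1 − ε) γ_{D_j}`, so with `I ≥ 0` the stage cost
contracts by the factor `1 − ε`, which is exactly the decrease `V_f(f(x,0)) − V_f(x) ≤ −γ_D^⊤ I`
for `V_f = γ_D^⊤ I / ε`.
-/

open Finset

namespace SIRD

variable {ι : Type*} [Fintype ι]

/-- The infected compartments after one step of the SIRD dynamics with zero vaccination. -/
def nextInfected (lam gR gD : ι → ℝ) (C : ι → ι → ℝ) (S I : ι → ℝ) (k : ι) : ℝ :=
  I k + lam k * S k * ∑ j, C k j * I j - (gR k + gD k) * I k

lemma nextInfected_zero (lam gR gD : ι → ℝ) (C : ι → ι → ℝ) (S : ι → ℝ) :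
    nextInfected lam gR gD C S 0 = 0 := by
  ext k
  simp [nextInfected]

lemma sum_mul_nextInfected (lam gR gD : ι → ℝ) (C : ι → ι → ℝ) (S I : ι → ℝ) :
    ∑ k, gD k * nextInfected lam gR gD C S I k
      = ∑ j, ((∑ k, C k j * (gD k * lam k) * S k) - gD j * (gR j + gD j - 1)) * I j := by
  have hinfection : ∑ k, gD k * (lam k * S k * ∑ j, C k j * I j)
      = ∑ j, (∑ k, C k j * (gD k * lam k) * S k) * I j := by
    simp only [mul_sum, sum_mul]
    rw [sum_comm]
    exact sum_congr rfl fun k _ => sum_congr rfl fun j _ => by ring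
  calc ∑ k, gD k * nextInfected lam gR gD C S I k
      = ∑ k, gD k * (lam k * S k * ∑ j, C k j * I j)
          - ∑ j, gD j * (gR j + gD j - 1) * I j := by
        rw [← sum_sub_distrib]
        exact sum_congr rfl fun k _ => by unfold nextInfected; ring
    _ = _ := by rw [hinfection, ← sum_sub_distrib]; simp only [sub_mul]

lemma sum_mul_nextInfected_le {lam gR gD : ι → ℝ} {C : ι → ι → ℝ} {S I : ι → ℝ} {eps : ℝ}
    (hS : ∀ j, ∑ k, C k j * (gD k * lam k) * S k ≤ gD j * (gR j + gD j - eps))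
    (hI : ∀ k, 0 ≤ I k) :
    ∑ k, gD k * nextInfected lam gR gD C S I k ≤ (1 - eps) * ∑ k, gD k * I k := by
  rw [sum_mul_nextInfected, mul_sum]
  refine sum_le_sum fun j _ => ?_
  calc ((∑ k, C k j * (gD k * lam k) * S k) - gD j * (gR j + gD j - 1)) * I j
      ≤ (gD j * (gR j + gD j - eps) - gD j * (gR j + gD j - 1)) * I j := by
        gcongr
        exacts [hI j, hS j]
    _ = (1 - eps) * (gD j * I j) := by ring

end SIRD

lemma one_div_mul_sub_le_neg_of_le_one_sub_mul {eps a b : ℝ} (heps : 0 < eps)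
    (h : b ≤ (1 - eps) * a) : 1 / eps * b - 1 / eps * a ≤ -a := by
  rw [← mul_sub, one_div_mul_eq_div, div_le_iff₀ heps]
  linarith

open SIRD in
theorem sird_terminal_cost_decrease_general
    (na : ℕ) (S I I' : Fin na → ℝ)
    (lam gR gD : Fin na → ℝ) (C : Fin na → Fin na → ℝ) (eps : ℝ)
    (hI0 : ∀ k, 0 ≤ I k)
    (heps0 : 0 < eps)
    -- x ∈ X_f
    (hXf : (∀ j, ∑ k, C k j * (gD k * lam k) * S k ≤ gD j * (gR j + gD j - eps))
           ∨ (∀ k, I k = 0))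
    -- dynamics with zero vaccination input
    (hI : ∀ k, I' k = I k + lam k * S k * ∑ j, C k j * I j - (gR k + gD k) * I k) :
    (1 / eps) * (∑ k, gD k * I' k) - (1 / eps) * (∑ k, gD k * I k)
      ≤ -(∑ k, gD k * I k) := by
  have hI' : I' = nextInfected lam gR gD C S I := funext hI
  refine one_div_mul_sub_le_neg_of_le_one_sub_mul heps0 ?_
  rcases hXf with hterminal | hzero
  · rw [hI']
    exact sum_mul_nextInfected_le hterminal hI0
  · obtain rfl : I = 0 := funext hzero
    simp [hI', nextInfected_zero]

/-- terminal cost `V_f(x) = (1/ε) γ_D^⊤ I` satisfies the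
Lyapunov decrease condition `V_f(f(x,0)) − V_f(x) ≤ −γ_D^⊤ I = −l(x,0)`
on the terminal set. -/
theorem sird_terminal_cost_decrease
    (na : ℕ) (S I I' : Fin na → ℝ)
    (lam gR gD : Fin na → ℝ) (C : Fin na → Fin na → ℝ) (eps : ℝ)
    (hgD : ∀ k, 0 < gD k) (hlam : ∀ k, 0 ≤ lam k) (hC : ∀ k j, 0 ≤ C k j)
    (hI0 : ∀ k, 0 ≤ I k)
    (heps0 : 0 < eps) (heps1 : ∀ k, eps < gR k + gD k)
    -- x ∈ X_f
    (hXf : (∀ j, ∑ k, C k j * (gD k * lam k) * S k ≤ gD j * (gR j + gD j - eps))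
           ∨ (∀ k, I k = 0))
    -- dynamics with zero vaccination input
    (hI : ∀ k, I' k = I k + lam k * S k * ∑ j, C k j * I j - (gR k + gD k) * I k) :
    (1 / eps) * (∑ k, gD k * I' k) - (1 / eps) * (∑ k, gD k * I k)
      ≤ -(∑ k, gD k * I k) :=
  sird_terminal_cost_decrease_general na S I I' lam gR gD C eps hI0 heps0 hXf hI
end

section
/- There exists η > 0 such that for all states with 0 ≤ S ≤ P and I ≥ 0, the SIRD dynamics satisfy γ_D^⊤ I(n+1) ≤ η · γ_D^⊤ I(n). Consequently γ_D^⊤ I(n+i) ≤ η^i γ_D^⊤ I(n) for all i ∈ ℕ along any trajectory remaining in the state set. -/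
open Finset

/-- there exists `η > 0` such that, along any trajectory of the
infected dynamics remaining in the state set (`0 ≤ S(n) ≤ P`, `I(n) ≥ 0`),
one has `γ_D^⊤ I(n+1) ≤ η γ_D^⊤ I(n)`, and consequently
`γ_D^⊤ I(n+i) ≤ η^i γ_D^⊤ I(n)` for all `i`. -/
theorem sird_weighted_infected_geometric_bound
    (na : ℕ) (P lam gR gD : Fin na → ℝ) (C : Fin na → Fin na → ℝ)
    (hP : ∀ k, 0 ≤ P k) (hlam : ∀ k, 0 ≤ lam k) (hC : ∀ k j, 0 ≤ C k j)
    (hgD : ∀ k, 0 < gD k) (hgR : ∀ k, 0 ≤ gR k)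
    (hg1 : ∀ k, gR k + gD k ≤ 1) :
    ∃ η : ℝ, 0 < η ∧
      ∀ (S I : ℕ → Fin na → ℝ),
        (∀ n k, 0 ≤ S n k) → (∀ n k, S n k ≤ P k) → (∀ n k, 0 ≤ I n k) →
        (∀ n k, I (n+1) k =
          I n k + S n k * lam k * (∑ j, C k j * I n j) - (gR k + gD k) * I n k) →
        ((∀ n, ∑ k, gD k * I (n+1) k ≤ η * ∑ k, gD k * I n k) ∧
         (∀ n i, ∑ k, gD k * I (n+i) k ≤ η ^ i * ∑ k, gD k * I n k)) := by
  classical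
  set M : ℝ := ∑ j, (∑ k, gD k * P k * lam k * C k j) / gD j with hM
  have hMterm : ∀ j, 0 ≤ (∑ k, gD k * P k * lam k * C k j) / gD j := by
    intro j
    apply div_nonneg
    · exact Finset.sum_nonneg fun k _ => by
        have := hP k; have := hlam k; have := hC k j; have := (hgD k).le
        positivity
    · exact (hgD j).le
  have hM0 : 0 ≤ M := Finset.sum_nonneg fun j _ => hMterm j
  have hMj : ∀ j, ∑ k, gD k * P k * lam k * C k j ≤ M * gD j := by
    intro j
    have h1 : (∑ k, gD k * P k * lam k * C k j) / gD j ≤ M :=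
      Finset.single_le_sum (fun j _ => hMterm j) (Finset.mem_univ j)
    calc ∑ k, gD k * P k * lam k * C k j
        = ((∑ k, gD k * P k * lam k * C k j) / gD j) * gD j :=
          (div_mul_cancel₀ _ (hgD j).ne').symm
      _ ≤ M * gD j := mul_le_mul_of_nonneg_right h1 (hgD j).le
  refine ⟨1 + M, by linarith, ?_⟩
  intro S I hS0 hSP hI0 hdyn
  have hsum0 : ∀ n, 0 ≤ ∑ k, gD k * I n k := fun n =>
    Finset.sum_nonneg fun k _ => mul_nonneg (hgD k).le (hI0 n k)
  have step : ∀ n, ∑ k, gD k * I (n+1) k ≤ (1 + M) * ∑ k, gD k * I n k := by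
    intro n
    have expand : ∑ k, gD k * I (n+1) k
        = ∑ k, gD k * (1 - (gR k + gD k)) * I n k
          + ∑ k, ∑ j, gD k * S n k * lam k * C k j * I n j := by
      rw [← Finset.sum_add_distrib]
      refine Finset.sum_congr rfl fun k _ => ?_
      rw [hdyn n k]
      have hs : gD k * S n k * lam k * ∑ j, C k j * I n j
          = ∑ j, gD k * S n k * lam k * C k j * I n j := by
        rw [Finset.mul_sum]
        exact Finset.sum_congr rfl fun j _ => by ring
      rw [← hs]; ring
    have h1 : ∑ k, gD k * (1 - (gR k + gD k)) * I n k ≤ ∑ k, gD k * I n k := by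
      refine Finset.sum_le_sum fun k _ => ?_
      have hle : gD k * (1 - (gR k + gD k)) ≤ gD k :=
        mul_le_of_le_one_right (hgD k).le (by linarith [hgR k, (hgD k).le])
      exact mul_le_mul_of_nonneg_right hle (hI0 n k)
    have h2 : ∑ k, ∑ j, gD k * S n k * lam k * C k j * I n j
        ≤ M * ∑ j, gD j * I n j := by
      rw [Finset.sum_comm, Finset.mul_sum]
      refine Finset.sum_le_sum fun j _ => ?_
      have hinner : ∑ k, gD k * S n k * lam k * C k j
          ≤ M * gD j := by
        refine le_trans (Finset.sum_le_sum fun k _ => ?_) (hMj j)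
        have : gD k * S n k ≤ gD k * P k :=
          mul_le_mul_of_nonneg_left (hSP n k) (hgD k).le
        have hnn : 0 ≤ lam k * C k j := mul_nonneg (hlam k) (hC k j)
        nlinarith
      calc ∑ k, gD k * S n k * lam k * C k j * I n j
          = (∑ k, gD k * S n k * lam k * C k j) * I n j := by
            rw [Finset.sum_mul]
        _ ≤ (M * gD j) * I n j :=
            mul_le_mul_of_nonneg_right hinner (hI0 n j)
        _ = M * (gD j * I n j) := by ring
    calc ∑ k, gD k * I (n+1) k
        = _ := expand
      _ ≤ ∑ k, gD k * I n k + M * ∑ j, gD j * I n j := add_le_add h1 h2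
      _ = (1 + M) * ∑ k, gD k * I n k := by ring
  refine ⟨step, ?_⟩
  intro n i
  induction i with
  | zero => simp
  | succ i ih =>
      have h := step (n + i)
      have hpow : (1 + M) * ((1 + M) ^ i * ∑ k, gD k * I n k)
          = (1 + M) ^ (i + 1) * ∑ k, gD k * I n k := by ring
      calc ∑ k, gD k * I (n + (i+1)) k
          = ∑ k, gD k * I ((n + i) + 1) k := rfl
        _ ≤ (1 + M) * ∑ k, gD k * I (n + i) k := h
        _ ≤ (1 + M) * ((1 + M) ^ i * ∑ k, gD k * I n k) :=
            mul_le_mul_of_nonneg_left ih (by linarith)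
        _ = (1 + M) ^ (i + 1) * ∑ k, gD k * I n k := hpow
end

section
/- If 0 < ε < min_k(γ_{R_k}+γ_{D_k}) and the terminal-region condition C^⊤ Λ S(n) ≤ Γ holds for all n ≥ n₀ along a trajectory with I(n) ≥ 0, then γ_D^⊤ I(n) ≤ (1−ε)^{n−n₀} γ_D^⊤ I(n₀) for all n ≥ n₀; in particular γ_D^⊤ I(n) → 0 geometrically. -/
open Finset Filter Topology

/-- if the terminal-region condition holds from time `n₀` on
along a trajectory, the weighted infected count decays geometrically with
rate `1 − ε` and tends to zero. -/
theorem sird_geometric_decay_in_terminal_region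
    (na : ℕ) (S I : ℕ → Fin na → ℝ)
    (lam gR gD : Fin na → ℝ) (C : Fin na → Fin na → ℝ) (eps : ℝ) (n₀ : ℕ)
    (hgD : ∀ k, 0 < gD k) (hlam : ∀ k, 0 ≤ lam k) (hC : ∀ k j, 0 ≤ C k j)
    (hIpos : ∀ n k, 0 ≤ I n k)
    (heps0 : 0 < eps) (heps1 : ∀ k, eps < gR k + gD k)
    (hcond : ∀ n ≥ n₀, ∀ j,
      ∑ k, gD k * lam k * S n k * C k j ≤ gD j * (gR j + gD j - eps))
    (hdyn : ∀ n k, I (n+1) k =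
      I n k + lam k * S n k * (∑ j, C k j * I n j) - (gR k + gD k) * I n k) :
    (∀ n ≥ n₀, ∑ k, gD k * I n k ≤ (1 - eps) ^ (n - n₀) * ∑ k, gD k * I n₀ k) ∧
    Tendsto (fun n => ∑ k, gD k * I n k) atTop (𝓝 0) := by
  have hsumpos : ∀ n, 0 ≤ ∑ k, gD k * I n k := fun n =>
    Finset.sum_nonneg fun k _ => mul_nonneg (hgD k).le (hIpos n k)
  -- one-step inequality
  have hstep : ∀ n, n₀ ≤ n →
      ∑ k, gD k * I (n+1) k ≤ (1 - eps) * ∑ k, gD k * I n k := by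
    intro n hn
    have h1 : ∑ k, gD k * I (n+1) k
        = ∑ k, gD k * I n k
          + ∑ k, (∑ j, gD k * lam k * S n k * C k j * I n j)
          - ∑ k, gD k * ((gR k + gD k) * I n k) := by
      rw [← Finset.sum_add_distrib, ← Finset.sum_sub_distrib]
      apply Finset.sum_congr rfl
      intro k _
      rw [hdyn]
      have hs : gD k * (lam k * S n k * ∑ j, C k j * I n j)
          = ∑ j, gD k * lam k * S n k * C k j * I n j := by
        rw [Finset.mul_sum, Finset.mul_sum]
        exact Finset.sum_congr rfl fun j _ => by ring
      rw [← hs]; ring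
    have hmid : ∑ k, (∑ j, gD k * lam k * S n k * C k j * I n j)
        ≤ ∑ j, gD j * (gR j + gD j - eps) * I n j := by
      rw [Finset.sum_comm]
      apply Finset.sum_le_sum
      intro j _
      have : ∑ k, gD k * lam k * S n k * C k j * I n j
          = (∑ k, gD k * lam k * S n k * C k j) * I n j := by
        rw [Finset.sum_mul]
      rw [this]
      exact mul_le_mul_of_nonneg_right (hcond n hn j) (hIpos n j)
    calc ∑ k, gD k * I (n+1) k
        ≤ ∑ k, gD k * I n k
          + ∑ j, gD j * (gR j + gD j - eps) * I n j
          - ∑ k, gD k * ((gR k + gD k) * I n k) := by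
          rw [h1]; linarith [hmid]
      _ = (1 - eps) * ∑ k, gD k * I n k := by
          rw [Finset.mul_sum, ← Finset.sum_add_distrib, ← Finset.sum_sub_distrib]
          apply Finset.sum_congr rfl
          intro k _; ring
  rcases le_or_gt 0 (1 - eps) with hle | hlt
  · -- 0 ≤ 1 - eps
    have hdecay : ∀ n ≥ n₀,
        ∑ k, gD k * I n k ≤ (1 - eps) ^ (n - n₀) * ∑ k, gD k * I n₀ k := by
      intro n hn
      induction n, hn using Nat.le_induction with
      | base => simp
      | succ m hm ih =>
        calc ∑ k, gD k * I (m+1) k ≤ (1 - eps) * ∑ k, gD k * I m k := hstep m hm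
          _ ≤ (1 - eps) * ((1 - eps) ^ (m - n₀) * ∑ k, gD k * I n₀ k) :=
              mul_le_mul_of_nonneg_left ih hle
          _ = (1 - eps) ^ (m + 1 - n₀) * ∑ k, gD k * I n₀ k := by
              rw [Nat.succ_sub hm, pow_succ]; ring
    refine ⟨hdecay, ?_⟩
    have habs : |1 - eps| < 1 := by
      rw [abs_of_nonneg hle]; linarith
    have hpow : Tendsto (fun n : ℕ => (1 - eps) ^ (n - n₀) * ∑ k, gD k * I n₀ k)
        atTop (𝓝 0) := by
      have h1 : Tendsto (fun n : ℕ => (1 - eps) ^ n) atTop (𝓝 0) :=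
        tendsto_pow_atTop_nhds_zero_of_abs_lt_one habs
      have h2 := (h1.comp (tendsto_sub_atTop_nat n₀)).mul_const (∑ k, gD k * I n₀ k)
      simpa using h2
    apply tendsto_of_tendsto_of_tendsto_of_le_of_le' tendsto_const_nhds hpow
    · exact Eventually.of_forall fun n => hsumpos n
    · filter_upwards [eventually_ge_atTop n₀] with n hn
      exact hdecay n hn
  · -- 1 - eps < 0 : everything must be zero from n₀ on
    have hzero : ∀ n ≥ n₀, ∑ k, gD k * I n k = 0 := by
      have hbase : ∑ k, gD k * I n₀ k = 0 := by
        have h1 := hstep n₀ le_rfl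
        have h2 := hsumpos (n₀ + 1)
        nlinarith [hsumpos n₀]
      intro n hn
      induction n, hn using Nat.le_induction with
      | base => exact hbase
      | succ m hm ih =>
        have h1 := hstep m hm
        rw [ih, mul_zero] at h1
        exact le_antisymm h1 (hsumpos (m+1))
    constructor
    · intro n hn
      rw [hzero n hn, hzero n₀ le_rfl, mul_zero]
    · apply Tendsto.congr' _ (tendsto_const_nhds (x := (0:ℝ)))
      filter_upwards [eventually_ge_atTop n₀] with n hn
      exact (hzero n hn).symm
end

section
/- In the scalar (single age group) discrete SIRD model with zero vaccination, if λ C S(0) < γ_R + γ_D and 0 < γ_R + γ_D ≤ 1, then I(n) ≤ (1 − (γ_R+γ_D) + λ C S(0))^n I(0) for all n, and hence I(n) → 0. -/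
open Filter Topology

/-- in the scalar SIRD model with zero vaccination, a subcritical
initial susceptible level forces geometric decay of the infected population. -/
theorem sird_scalar_subcritical_decay
    (S I : ℕ → ℝ) (lam C gR gD : ℝ)
    (hlam : 0 ≤ lam) (hC : 0 ≤ C) (hgR : 0 ≤ gR) (hgD : 0 ≤ gD)
    (hI0 : 0 ≤ I 0) (hS0 : 0 ≤ S 0)
    (hSanti : Antitone S) (hSpos : ∀ n, 0 ≤ S n)
    (hdynS : ∀ n, S (n+1) = S n - lam * C * S n * I n)
    (hdynI : ∀ n, I (n+1) = I n + lam * C * S n * I n - (gR + gD) * I n)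
    (hsub : lam * C * S 0 < gR + gD)
    (hg0 : 0 < gR + gD) (hg1 : gR + gD ≤ 1) :
    (∀ n, I n ≤ (1 - (gR + gD) + lam * C * S 0) ^ n * I 0) ∧
    Tendsto I atTop (𝓝 0) := by
  set r : ℝ := 1 - (gR + gD) + lam * C * S 0 with hr
  have hr0 : 0 ≤ r := by
    have : 0 ≤ lam * C * S 0 := by positivity
    simp only [hr]; linarith
  have hr1 : r < 1 := by simp only [hr]; linarith
  have hIpos : ∀ n, 0 ≤ I n := by
    intro n
    induction n with
    | zero => exact hI0
    | succ k ih =>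
      rw [hdynI k]
      have h1 : 0 ≤ lam * C * S k * I k := by
        have := hSpos k; positivity
      nlinarith [hSpos k, mul_nonneg (mul_nonneg hlam hC) (hSpos k)]
  have hbound : ∀ n, I n ≤ r ^ n * I 0 := by
    intro n
    induction n with
    | zero => simp
    | succ k ih =>
      have hSk : S k ≤ S 0 := hSanti (Nat.zero_le k)
      have hstep : I (k + 1) ≤ r * I k := by
        rw [hdynI k, hr]
        have : lam * C * S k * I k ≤ lam * C * S 0 * I k :=
          mul_le_mul_of_nonneg_right
            (mul_le_mul_of_nonneg_left hSk (by positivity)) (hIpos k)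
        linarith
      calc I (k + 1) ≤ r * I k := hstep
        _ ≤ r * (r ^ k * I 0) := mul_le_mul_of_nonneg_left ih hr0
        _ = r ^ (k + 1) * I 0 := by ring
  refine ⟨hbound, ?_⟩
  have hlim : Tendsto (fun n => r ^ n * I 0) atTop (𝓝 0) := by
    have := (tendsto_pow_atTop_nhds_zero_of_norm_lt_one (x := r)
      (by rw [Real.norm_eq_abs, abs_lt]; constructor <;> linarith)).mul_const (I 0)
    simpa using this
  exact squeeze_zero hIpos hbound hlim
end
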